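/- Let f : [a,b] → ℝ be bounded and let A ∈ ℝ. Then the following are equivalent: (1) f is Riemann integrable on [a,b] and ∫_a^b f(x) dx = A; (2) every generalized primitive F of f satisfies F(b) − F(a) = A. -/

import Mathlib

noncomputable section

/-- A partition of `[a, b]` given by points `x 0 = a < x 1 < ⋯ < x n = b`. -/
def IsPartition (a b : ℝ) (n : ℕ) (x : ℕ → ℝ) : Prop :=
  x 0 = a ∧ x n = b ∧ ∀ i < n, x i < x (i + 1)

/-- The lower Darboux sum of `f` associated to the partition points `x 0, …, x n`. -/
noncomputable def lowerSum (f : ℝ → ℝ) (n : ℕ) (x : ℕ → ℝ) : ℝ :=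
  ∑ i ∈ Finset.range n, sInf (f '' Set.Icc (x i) (x (i + 1))) * (x (i + 1) - x i)

/-- The upper Darboux sum of `f` associated to the partition points `x 0, …, x n`. -/
noncomputable def upperSum (f : ℝ → ℝ) (n : ℕ) (x : ℕ → ℝ) : ℝ :=
  ∑ i ∈ Finset.range n, sSup (f '' Set.Icc (x i) (x (i + 1))) * (x (i + 1) - x i)

/-- The lower Darboux integral of `f` over `[a, b]`: the supremum of the lower sums. -/
noncomputable def lowerDarboux (f : ℝ → ℝ) (a b : ℝ) : ℝ :=
  sSup {s : ℝ | ∃ n x, IsPartition a b n x ∧ s = lowerSum f n x}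

/-- The upper Darboux integral of `f` over `[a, b]`: the infimum of the upper sums. -/
noncomputable def upperDarboux (f : ℝ → ℝ) (a b : ℝ) : ℝ :=
  sInf {s : ℝ | ∃ n x, IsPartition a b n x ∧ s = upperSum f n x}

/-- `f` is bounded on the set `s`. -/
def BoundedOn (f : ℝ → ℝ) (s : Set ℝ) : Prop := ∃ M : ℝ, ∀ x ∈ s, |f x| ≤ M

/-- `f` is Riemann integrable on `[a, b]`: it is bounded there and its lower and upper
Darboux integrals coincide. -/
def RiemannIntegrableOn (f : ℝ → ℝ) (a b : ℝ) : Prop :=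
  BoundedOn f (Set.Icc a b) ∧ lowerDarboux f a b = upperDarboux f a b

/-- The oriented Riemann integral `∫_u^v f`: for `u ≤ v` it is the (lower) Darboux integral
over `[u, v]` (equal to the upper one when `f` is Riemann integrable, and `0` when `u = v`),
and for `v < u` it is minus the integral over `[v, u]`. -/
noncomputable def riemannIntegral (f : ℝ → ℝ) (u v : ℝ) : ℝ :=
  if u ≤ v then lowerDarboux f u v else -lowerDarboux f v u

/-- `F` is a generalized primitive of `f` on `[a, b]`: for all `x < y` in `[a, b]`,
`inf_{[x,y]} f ≤ (F y - F x)/(y - x) ≤ sup_{[x,y]} f`. -/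
def IsGenPrimitive (a b : ℝ) (f F : ℝ → ℝ) : Prop :=
  ∀ x ∈ Set.Icc a b, ∀ y ∈ Set.Icc a b, x < y →
    sInf (f '' Set.Icc x y) ≤ (F y - F x) / (y - x) ∧
      (F y - F x) / (y - x) ≤ sSup (f '' Set.Icc x y)

/-! A generalized primitive `F` telescopes over any partition, so `F b - F a` lies between every
lower and every upper sum, hence between the lower and the upper Darboux integral.

Conversely, `L t := lowerDarboux f a t` is itself a generalized primitive. Appending the point `y`
to a partition of `[a, x]` gives `L x + inf_{[x,y]} f · (y - x) ≤ L y`. For the reverse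
bound, clip a partition `p` of `[a, y]` at `x`: the points `min (p i) x` form a weakly increasing
subdivision of `[a, x]`, whose lower sum is still at most `L x` by the first bound, and the
points `max (p i) x` contribute at most `sup_{[x,y]} f · (y - x)`. Applied to `-f`, the same
argument makes `t ↦ upperDarboux f a t` a generalized primitive, so condition (2) forces both
Darboux integrals to equal `A`. -/

open Set

lemma le_of_forall_le_succ {α : Type*} [Preorder α] {n : ℕ} {x : ℕ → α}
    (h : ∀ i < n, x i ≤ x (i + 1)) {i j : ℕ} (hij : i ≤ j) (hjn : j ≤ n) : x i ≤ x j := by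
  induction hij with
  | refl => exact le_rfl
  | step _ ih => exact (ih (by omega)).trans (h _ (by omega))

lemma Set.image_neg_eq_neg_image (f : ℝ → ℝ) (s : Set ℝ) : (-f) '' s = -(f '' s) := by
  rw [← image_neg_eq_neg, image_image]
  rfl

lemma isPartition_self (a : ℝ) : IsPartition a a 0 fun _ => a :=
  ⟨rfl, rfl, fun _ hi => absurd hi (Nat.not_lt_zero _)⟩

namespace IsPartition

variable {a b : ℝ} {n : ℕ} {x : ℕ → ℝ}

lemma le_succ (hp : IsPartition a b n x) : ∀ i < n, x i ≤ x (i + 1) :=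
  fun i hi => (hp.2.2 i hi).le

lemma mem_Icc (hp : IsPartition a b n x) {i : ℕ} (hi : i ≤ n) : x i ∈ Icc a b :=
  ⟨hp.1 ▸ le_of_forall_le_succ hp.le_succ i.zero_le hi,
    hp.2.1 ▸ le_of_forall_le_succ hp.le_succ hi le_rfl⟩

lemma length_eq_zero (hp : IsPartition a a n x) : n = 0 := by
  by_contra hn
  have h₀₁ := hp.2.2 0 (Nat.pos_of_ne_zero hn)
  have h₁ := (hp.mem_Icc (Nat.one_le_iff_ne_zero.mpr hn)).2
  rw [hp.1] at h₀₁
  linarith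

lemma update_succ (hp : IsPartition a b n x) {c : ℝ} (hbc : b < c) :
    IsPartition a c (n + 1) (Function.update x (n + 1) c) := by
  refine ⟨by simpa using hp.1, by simp, fun i hi => ?_⟩
  rcases Nat.lt_succ_iff_lt_or_eq.mp hi with hi | rfl
  · rw [Function.update_of_ne (by omega), Function.update_of_ne (by omega)]
    exact hp.2.2 i hi
  · rw [Function.update_self, Function.update_of_ne (by omega), hp.2.1]
    exact hbc

end IsPartition

lemma exists_isPartition {a b : ℝ} (hab : a ≤ b) : ∃ n x, IsPartition a b n x := by
  rcases hab.eq_or_lt with rfl | hab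
  · exact ⟨0, _, isPartition_self a⟩
  · exact ⟨1, _, (isPartition_self a).update_succ hab⟩

namespace BoundedOn

variable {f : ℝ → ℝ} {s t : Set ℝ}

lemma mono (hf : BoundedOn f s) (hts : t ⊆ s) : BoundedOn f t :=
  let ⟨M, hM⟩ := hf
  ⟨M, fun x hx => hM x (hts hx)⟩

lemma neg (hf : BoundedOn f s) : BoundedOn (-f) s :=
  let ⟨M, hM⟩ := hf
  ⟨M, fun x hx => by simpa using hM x hx⟩

lemma bddAbove_image (hf : BoundedOn f s) : BddAbove (f '' s) :=
  let ⟨M, hM⟩ := hf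
  ⟨M, by rintro _ ⟨x, hx, rfl⟩; exact le_of_abs_le (hM x hx)⟩

lemma bddBelow_image (hf : BoundedOn f s) : BddBelow (f '' s) :=
  let ⟨M, hM⟩ := hf
  ⟨-M, by rintro _ ⟨x, hx, rfl⟩; exact neg_le_of_abs_le (hM x hx)⟩

end BoundedOn

section Darboux

variable {f : ℝ → ℝ} {a b : ℝ} {n : ℕ} {x : ℕ → ℝ}

lemma lowerSum_succ (f : ℝ → ℝ) (n : ℕ) (x : ℕ → ℝ) :
    lowerSum f (n + 1) x =
      lowerSum f n x + sInf (f '' Icc (x n) (x (n + 1))) * (x (n + 1) - x n) :=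
  Finset.sum_range_succ _ _

lemma lowerSum_update_succ (f : ℝ → ℝ) (n : ℕ) (x : ℕ → ℝ) (c : ℝ) :
    lowerSum f (n + 1) (Function.update x (n + 1) c) =
      lowerSum f n x + sInf (f '' Icc (x n) c) * (c - x n) := by
  rw [lowerSum_succ, Function.update_self, Function.update_of_ne (by omega)]
  congr 1
  refine Finset.sum_congr rfl fun i hi => ?_
  rw [Finset.mem_range] at hi
  rw [Function.update_of_ne (by omega), Function.update_of_ne (by omega)]

lemma upperSum_eq_neg_lowerSum_neg (f : ℝ → ℝ) (n : ℕ) (x : ℕ → ℝ) :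
    upperSum f n x = -lowerSum (-f) n x := by
  simp only [upperSum, lowerSum, image_neg_eq_neg_image, Real.sInf_neg, neg_mul,
    Finset.sum_neg_distrib, neg_neg]

lemma upperDarboux_eq_neg_lowerDarboux_neg (f : ℝ → ℝ) (a b : ℝ) :
    upperDarboux f a b = -lowerDarboux (-f) a b := by
  have hsums : {s | ∃ n x, IsPartition a b n x ∧ s = lowerSum (-f) n x} =
      -{s | ∃ n x, IsPartition a b n x ∧ s = upperSum f n x} := by
    ext s
    simp only [mem_neg, mem_ofPred_eq, upperSum_eq_neg_lowerSum_neg, neg_neg, neg_eq_iff_eq_neg]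
  rw [lowerDarboux, hsums, Real.sSup_neg, neg_neg, upperDarboux]

lemma bddAbove_lowerSums (hf : BoundedOn f (Icc a b)) :
    BddAbove {s | ∃ n x, IsPartition a b n x ∧ s = lowerSum f n x} := by
  obtain ⟨M, hM⟩ := hf
  refine ⟨M * (b - a), ?_⟩
  rintro _ ⟨n, x, hp, rfl⟩
  have hterm : ∀ i ∈ Finset.range n, sInf (f '' Icc (x i) (x (i + 1))) * (x (i + 1) - x i) ≤
      M * (x (i + 1) - x i) := by
    intro i hi
    rw [Finset.mem_range] at hi
    have hxi := hp.mem_Icc hi.le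
    have hbdd : BoundedOn f (Icc (x i) (x (i + 1))) :=
      ⟨M, fun t ht => hM t ⟨hxi.1.trans ht.1, ht.2.trans (hp.mem_Icc hi).2⟩⟩
    refine mul_le_mul_of_nonneg_right ?_ (sub_nonneg.2 (hp.le_succ i hi))
    exact (csInf_le hbdd.bddBelow_image (mem_image_of_mem f ⟨le_rfl, hp.le_succ i hi⟩)).trans
      (le_of_abs_le (hM _ hxi))
  calc lowerSum f n x ≤ ∑ i ∈ Finset.range n, M * (x (i + 1) - x i) := Finset.sum_le_sum hterm
    _ = M * (b - a) := by rw [← Finset.mul_sum, Finset.sum_range_sub x, hp.1, hp.2.1]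

lemma lowerSum_le_lowerDarboux (hf : BoundedOn f (Icc a b)) (hp : IsPartition a b n x) :
    lowerSum f n x ≤ lowerDarboux f a b :=
  le_csSup (bddAbove_lowerSums hf) ⟨n, x, hp, rfl⟩

lemma lowerDarboux_le {c : ℝ} (hab : a ≤ b)
    (h : ∀ n x, IsPartition a b n x → lowerSum f n x ≤ c) : lowerDarboux f a b ≤ c := by
  obtain ⟨n, x, hp⟩ := exists_isPartition hab
  refine csSup_le ⟨_, n, x, hp, rfl⟩ ?_
  rintro _ ⟨n, x, hp, rfl⟩
  exact h n x hp

lemma lowerDarboux_self (f : ℝ → ℝ) (a : ℝ) : lowerDarboux f a a = 0 := by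
  refine le_antisymm (lowerDarboux_le le_rfl fun n x hp => ?_) ?_
  · simp [hp.length_eq_zero, lowerSum]
  · have hf : BoundedOn f (Icc a a) := ⟨|f a|, by simp⟩
    simpa [lowerSum] using lowerSum_le_lowerDarboux hf (isPartition_self a)

lemma upperDarboux_self (f : ℝ → ℝ) (a : ℝ) : upperDarboux f a a = 0 := by
  rw [upperDarboux_eq_neg_lowerDarboux_neg, lowerDarboux_self, neg_zero]

end Darboux

namespace IsGenPrimitive

variable {f F : ℝ → ℝ} {a b : ℝ}

lemma neg (hF : IsGenPrimitive a b f F) : IsGenPrimitive a b (-f) (-F) := by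
  intro x hx y hy hxy
  obtain ⟨h₁, h₂⟩ := hF x hx y hy hxy
  have hquot : ((-F) y - (-F) x) / (y - x) = -((F y - F x) / (y - x)) := by
    simp only [Pi.neg_apply]
    ring
  rw [hquot, image_neg_eq_neg_image, Real.sInf_neg, Real.sSup_neg]
  exact ⟨neg_le_neg h₂, neg_le_neg h₁⟩

lemma lowerSum_le {n : ℕ} {x : ℕ → ℝ} (hF : IsGenPrimitive a b f F) (hp : IsPartition a b n x) :
    lowerSum f n x ≤ F b - F a := by
  rw [← hp.1, ← hp.2.1, ← Finset.sum_range_sub (fun i => F (x i))]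
  refine Finset.sum_le_sum fun i hi => ?_
  rw [Finset.mem_range] at hi
  have hlt := hp.2.2 i hi
  rw [← le_div_iff₀ (sub_pos.2 hlt)]
  exact (hF _ (hp.mem_Icc hi.le) _ (hp.mem_Icc hi) hlt).1

lemma lowerDarboux_le (hF : IsGenPrimitive a b f F) (hab : a ≤ b) :
    lowerDarboux f a b ≤ F b - F a :=
  _root_.lowerDarboux_le hab fun _ _ hp => hF.lowerSum_le hp

lemma le_upperDarboux (hF : IsGenPrimitive a b f F) (hab : a ≤ b) :
    F b - F a ≤ upperDarboux f a b := by
  have h := hF.neg.lowerDarboux_le hab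
  rw [upperDarboux_eq_neg_lowerDarboux_neg]
  simp only [Pi.neg_apply] at h
  linarith

end IsGenPrimitive

section LowerIntegral

variable {f : ℝ → ℝ} {a x y : ℝ}

lemma lowerDarboux_add_sInf_mul_le (hf : BoundedOn f (Icc a y)) (hax : a ≤ x) (hxy : x ≤ y) :
    lowerDarboux f a x + sInf (f '' Icc x y) * (y - x) ≤ lowerDarboux f a y := by
  rcases hxy.eq_or_lt with rfl | hxy
  · simp
  rw [← le_sub_iff_add_le]
  refine lowerDarboux_le hax fun n p hp => le_sub_iff_add_le.mpr ?_
  have h := lowerSum_le_lowerDarboux hf (hp.update_succ hxy)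
  rwa [lowerSum_update_succ, hp.2.1] at h

lemma lowerSum_le_lowerDarboux_of_le_succ {n : ℕ} {q : ℕ → ℝ} (hq₀ : q 0 = a)
    (hq : ∀ i < n, q i ≤ q (i + 1)) (hf : BoundedOn f (Icc a (q n))) :
    lowerSum f n q ≤ lowerDarboux f a (q n) := by
  induction n with
  | zero => simp [lowerSum, hq₀, lowerDarboux_self]
  | succ m ih =>
    have hq' : ∀ i < m, q i ≤ q (i + 1) := fun i hi => hq i (by omega)
    have ham : a ≤ q m := hq₀ ▸ le_of_forall_le_succ hq' m.zero_le le_rfl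
    have hstep := hq m m.lt_succ_self
    rw [lowerSum_succ]
    calc _ ≤ lowerDarboux f a (q m) + sInf (f '' Icc (q m) (q (m + 1))) * (q (m + 1) - q m) :=
          add_le_add_left (ih hq' (hf.mono (Icc_subset_Icc_right hstep))) _
      _ ≤ _ := lowerDarboux_add_sInf_mul_le hf ham hstep

lemma sInf_mul_sub_le_min_add_max {u v : ℝ} (huv : u ≤ v) (hvy : v ≤ y)
    (hbelow : BddBelow (f '' Icc u v)) (habove : BddAbove (f '' Icc x y)) :
    sInf (f '' Icc u v) * (v - u) ≤
      sInf (f '' Icc (min u x) (min v x)) * (min v x - min u x) +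
        sSup (f '' Icc x y) * (max v x - max u x) := by
  have inf_le_sup {t : ℝ} (htuv : t ∈ Icc u v) (htxy : t ∈ Icc x y) :
      sInf (f '' Icc u v) ≤ sSup (f '' Icc x y) :=
    (csInf_le hbelow (mem_image_of_mem f htuv)).trans (le_csSup habove (mem_image_of_mem f htxy))
  rcases le_total v x with hvx | hxv
  · simp [hvx, huv.trans hvx]
  rcases le_total x u with hxu | hux
  · rw [min_eq_right hxu, min_eq_right hxv, max_eq_left hxu, max_eq_left hxv, sub_self,
      mul_zero, zero_add]
    exact mul_le_mul_of_nonneg_right (inf_le_sup ⟨le_rfl, huv⟩ ⟨hxu, huv.trans hvy⟩)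
      (sub_nonneg.2 huv)
  · rw [min_eq_left hux, min_eq_right hxv, max_eq_right hux, max_eq_left hxv]
    have h₁ : sInf (f '' Icc u v) ≤ sInf (f '' Icc u x) :=
      csInf_le_csInf hbelow ((nonempty_Icc.2 hux).image f)
        (image_mono (Icc_subset_Icc_right hxv))
    have h₂ := inf_le_sup ⟨hux, hxv⟩ ⟨le_rfl, hxv.trans hvy⟩
    calc sInf (f '' Icc u v) * (v - u)
        = sInf (f '' Icc u v) * (x - u) + sInf (f '' Icc u v) * (v - x) := by ring
      _ ≤ _ := add_le_add (mul_le_mul_of_nonneg_right h₁ (sub_nonneg.2 hux))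
          (mul_le_mul_of_nonneg_right h₂ (sub_nonneg.2 hxv))

lemma lowerDarboux_le_add_sSup_mul (hf : BoundedOn f (Icc a y)) (hax : a ≤ x) (hxy : x ≤ y) :
    lowerDarboux f a y ≤ lowerDarboux f a x + sSup (f '' Icc x y) * (y - x) := by
  refine lowerDarboux_le (hax.trans hxy) fun n p hp => ?_
  set S := sSup (f '' Icc x y)
  have hclip : lowerSum f n (fun i => min (p i) x) ≤ lowerDarboux f a x := by
    have h := lowerSum_le_lowerDarboux_of_le_succ (f := f) (a := a) (q := fun i => min (p i) x)
      (by simp [hp.1, hax]) (fun i hi => min_le_min_right x (hp.le_succ i hi))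
      (by simpa [hp.2.1, hxy] using hf.mono (Icc_subset_Icc_right hxy))
    simpa [hp.2.1, hxy] using h
  have hrest : ∑ i ∈ Finset.range n, S * (max (p (i + 1)) x - max (p i) x) = S * (y - x) := by
    rw [← Finset.mul_sum, Finset.sum_range_sub (fun i => max (p i) x), hp.1, hp.2.1,
      max_eq_left hxy, max_eq_right hax]
  calc lowerSum f n p
      ≤ ∑ i ∈ Finset.range n,
          (sInf (f '' Icc (min (p i) x) (min (p (i + 1)) x)) * (min (p (i + 1)) x - min (p i) x) +
            S * (max (p (i + 1)) x - max (p i) x)) := by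
        refine Finset.sum_le_sum fun i hi => ?_
        rw [Finset.mem_range] at hi
        exact sInf_mul_sub_le_min_add_max (hp.le_succ i hi) (hp.mem_Icc hi).2
          (hf.mono (Icc_subset_Icc (hp.mem_Icc hi.le).1 (hp.mem_Icc hi).2)).bddBelow_image
          (hf.mono (Icc_subset_Icc_left hax)).bddAbove_image
    _ = lowerSum f n (fun i => min (p i) x) + S * (y - x) := by
        rw [Finset.sum_add_distrib, hrest]
        rfl
    _ ≤ lowerDarboux f a x + S * (y - x) := add_le_add_left hclip _

end LowerIntegral

section GenPrimitive

variable {f : ℝ → ℝ} {a b : ℝ}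

theorem isGenPrimitive_lowerDarboux (hf : BoundedOn f (Icc a b)) :
    IsGenPrimitive a b f (lowerDarboux f a) := by
  intro x hx y hy hxy
  have hfy : BoundedOn f (Icc a y) := hf.mono (Icc_subset_Icc_right hy.2)
  have h₁ := lowerDarboux_add_sInf_mul_le hfy hx.1 hxy.le
  have h₂ := lowerDarboux_le_add_sSup_mul hfy hx.1 hxy.le
  have hpos : 0 < y - x := sub_pos.2 hxy
  exact ⟨by rw [le_div_iff₀ hpos]; linarith, by rw [div_le_iff₀ hpos]; linarith⟩

theorem isGenPrimitive_upperDarboux (hf : BoundedOn f (Icc a b)) :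
    IsGenPrimitive a b f (upperDarboux f a) := by
  have hU : upperDarboux f a = -lowerDarboux (-f) a :=
    funext (upperDarboux_eq_neg_lowerDarboux_neg f a)
  simpa only [hU, neg_neg] using (isGenPrimitive_lowerDarboux hf.neg).neg

end GenPrimitive

/-- **Integrability test via generalized primitives.** For bounded `f` on `[a, b]` and
`A ∈ ℝ`, `f` is Riemann integrable with `∫_a^b f = A` if and only if every generalized
primitive `F` of `f` satisfies `F b - F a = A`. -/
theorem riemannIntegrable_iff_genPrimitive_barrow (a b : ℝ) (hab : a ≤ b) (f : ℝ → ℝ)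
    (hf : BoundedOn f (Set.Icc a b)) (A : ℝ) :
    (RiemannIntegrableOn f a b ∧ riemannIntegral f a b = A) ↔
      (∀ F : ℝ → ℝ, IsGenPrimitive a b f F → F b - F a = A) := by
  rw [riemannIntegral, if_pos hab]
  constructor
  · rintro ⟨⟨-, hLU⟩, hL⟩ F hF
    have h₁ := hF.lowerDarboux_le hab
    have h₂ := hF.le_upperDarboux hab
    linarith
  · intro h
    have hL := h _ (isGenPrimitive_lowerDarboux hf)
    have hU := h _ (isGenPrimitive_upperDarboux hf)
    rw [lowerDarboux_self, sub_zero] at hL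
    rw [upperDarboux_self, sub_zero] at hU
    exact ⟨⟨hf, hL.trans hU.symm⟩, hL⟩
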